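/- Let l be a monic irreducible polynomial of A such that φ has good reduction at the primes of L lying over l and l is unramified in the maximal separable subextension L_s/k. Then: (1) the A-action defined by a · ψ_λ = ψ_{φ_a(λ)} (via decompositions a ≡ Σ a_i (mod l) with gcd(a_i, l) = 1 and the conjugation action of Gal(L_l/L)) is well-defined and gives an A-module structure on H_{l,z} = Gal(L_{l,z}/L_l), and consequently on H_{l,Γ} = Gal(L_{l,Γ}/L_l); (2) the image H_l of H_{l,z} in Λ_l^φ is an A-submodule of Λ_l^φ, H_{l,z} and H_l are isomorphic as A-modules, and H_{l,z} and H_{l,Γ} are A-modules of exponent l (annihilated by l). -/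

import Mathlib

open Polynomial IntermediateField

set_option synthInstance.maxHeartbeats 1000000
set_option maxHeartbeats 1000000

/-- `φ` is a rank one Drinfeld `A = 𝔽_q[T]`-module defined over the finite extension
`L` of `k = 𝔽_q(T)` (viewed as an `A`-field of generic characteristic): a ring
homomorphism `A → End_{𝔽_q}(k̄, +)` with `φ_T(X) = TX + aX^q` for some nonzero
`a ∈ L`, and `φ_c(X) = cX` for constants `c ∈ 𝔽_q`. -/
def IsDrinfeldRankOne {Fq : Type} [Field Fq] [Fintype Fq]
    (L : IntermediateField (RatFunc Fq) (AlgebraicClosure (RatFunc Fq)))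
    (φ : Polynomial Fq →+* AddMonoid.End (AlgebraicClosure (RatFunc Fq))) : Prop :=
  ∃ a : AlgebraicClosure (RatFunc Fq), a ∈ L ∧ a ≠ 0 ∧
    (∀ α, φ X α = algebraMap (RatFunc Fq) (AlgebraicClosure (RatFunc Fq)) RatFunc.X * α
        + a * α ^ Fintype.card Fq) ∧
    (∀ (c : Fq) (α), φ (C c) α
        = algebraMap (RatFunc Fq) (AlgebraicClosure (RatFunc Fq)) (RatFunc.C c) * α)

/-- An automorphism `τ ∈ Gal(E/L)` fixes the `l`-torsion points `Λ_l^φ` pointwise; when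
`E ⊇ L_l = L(Λ_l^φ)` this says exactly `τ ∈ Gal(E/L_l)`. -/
def FixesTorsionD {Fq : Type} [Field Fq] [Fintype Fq]
    {L : IntermediateField (RatFunc Fq) (AlgebraicClosure (RatFunc Fq))}
    (φ : Polynomial Fq →+* AddMonoid.End (AlgebraicClosure (RatFunc Fq)))
    (l : Polynomial Fq)
    {E : IntermediateField (↥L) (AlgebraicClosure (RatFunc Fq))}
    (τ : ↥E ≃ₐ[↥L] ↥E) : Prop :=
  ∀ x : ↥E, φ l (x : AlgebraicClosure (RatFunc Fq)) = 0 → τ x = x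

/-- An automorphism `s ∈ Gal(E/L)` is an extension of `σ_u ∈ Gal(L_l/L)`, i.e. it acts
on the `l`-torsion points `Λ_l^φ ⊆ E` by `λ ↦ φ_u(λ)`. -/
def ExtendsSigmaD {Fq : Type} [Field Fq] [Fintype Fq]
    {L : IntermediateField (RatFunc Fq) (AlgebraicClosure (RatFunc Fq))}
    (φ : Polynomial Fq →+* AddMonoid.End (AlgebraicClosure (RatFunc Fq)))
    (l : Polynomial Fq)
    {E : IntermediateField (↥L) (AlgebraicClosure (RatFunc Fq))}
    (s : ↥E ≃ₐ[↥L] ↥E) (u : Polynomial Fq) : Prop :=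
  ∀ x : ↥E, φ l (x : AlgebraicClosure (RatFunc Fq)) = 0 →
    ((s x : AlgebraicClosure (RatFunc Fq))) = φ u (x : AlgebraicClosure (RatFunc Fq))

/-- `c` is the natural `A`-action on `Gal(E/L_l)`, defined via decompositions: for
`f ≡ f_1 + ⋯ + f_n (mod l)` with all `gcd(f_i, l) = 1` and extensions `s_i` of
`σ_{f_i} ∈ Gal(L_l/L)`, one has `c f τ = Σ_i s_i ∘ τ ∘ s_i⁻¹` (conjugation action). -/
def IsDecompConjActionD {Fq : Type} [Field Fq] [Fintype Fq]
    {L : IntermediateField (RatFunc Fq) (AlgebraicClosure (RatFunc Fq))}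
    (φ : Polynomial Fq →+* AddMonoid.End (AlgebraicClosure (RatFunc Fq)))
    (l : Polynomial Fq)
    {E : IntermediateField (↥L) (AlgebraicClosure (RatFunc Fq))}
    (c : Polynomial Fq → (↥E ≃ₐ[↥L] ↥E) → (↥E ≃ₐ[↥L] ↥E)) : Prop :=
  ∀ (f : Polynomial Fq) (τ : ↥E ≃ₐ[↥L] ↥E), FixesTorsionD φ l τ →
    ∀ (n : ℕ) (g : Fin n → Polynomial Fq), (∀ i, IsCoprime (g i) l) →
      l ∣ (f - ∑ i, g i) →
      ∀ s : Fin n → (↥E ≃ₐ[↥L] ↥E), (∀ i, ExtendsSigmaD φ l (s i) (g i)) →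
        c f τ = (List.ofFn (fun i => s i * τ * (s i)⁻¹)).prod

/-- Stand-in for the standing hypotheses on `l` in Section 3: `l` is a monic
irreducible polynomial of `A` such that (a) `φ` has good reduction at the primes of `L`
lying over `l`, and (b) `l` is unramified in the maximal separable subextension
`L_s/k`.  By `[Goss, Theorem 7.7.1]` these conditions yield exactly that
`Gal(L(Λ_l^φ)/L) ≅ (A/lA)^*`, every element being of the form
`σ_u : λ ↦ φ_u(λ)` with `u` prime to `l`; we take this description of the Galois group
of `L_l = L(Λ_l^φ)` over `L` as the formal content of the hypotheses (a) and (b). -/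
def GaloisGroupOfTorsionIsFull {Fq : Type} [Field Fq] [Fintype Fq]
    {L : IntermediateField (RatFunc Fq) (AlgebraicClosure (RatFunc Fq))}
    (φ : Polynomial Fq →+* AddMonoid.End (AlgebraicClosure (RatFunc Fq)))
    (l : Polynomial Fq)
    (Ll : IntermediateField (↥L) (AlgebraicClosure (RatFunc Fq))) : Prop :=
  (∀ σ : ↥Ll ≃ₐ[↥L] ↥Ll, ∃ u : Polynomial Fq, ¬ l ∣ u ∧
    ∀ x : ↥Ll, φ l (x : AlgebraicClosure (RatFunc Fq)) = 0 →
      ((σ x : AlgebraicClosure (RatFunc Fq))) = φ u (x : AlgebraicClosure (RatFunc Fq))) ∧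
  (∀ u : Polynomial Fq, ¬ l ∣ u → ∃ σ : ↥Ll ≃ₐ[↥L] ↥Ll,
    ∀ x : ↥Ll, φ l (x : AlgebraicClosure (RatFunc Fq)) = 0 →
      ((σ x : AlgebraicClosure (RatFunc Fq))) = φ u (x : AlgebraicClosure (RatFunc Fq)))

set_option linter.unusedSectionVars false
section DrinAux

variable {Fq : Type} [Field Fq] [Fintype Fq]

local notation "Kbar" => AlgebraicClosure (RatFunc Fq)

variable {L : IntermediateField (RatFunc Fq) (AlgebraicClosure (RatFunc Fq))}
  {φ : Polynomial Fq →+* AddMonoid.End (AlgebraicClosure (RatFunc Fq))}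

lemma phi_add_apply (f g : Polynomial Fq) (x : Kbar) : φ (f + g) x = φ f x + φ g x := by
  rw [map_add]; rfl

lemma phi_mul_apply (f g : Polynomial Fq) (x : Kbar) : φ (f * g) x = φ f (φ g x) := by
  rw [map_mul]; rfl

lemma phi_comm {G : Type} [FunLike G (AlgebraicClosure (RatFunc Fq)) (AlgebraicClosure (RatFunc Fq))]
    [RingHomClass G (AlgebraicClosure (RatFunc Fq)) (AlgebraicClosure (RatFunc Fq))]
    (hφ : IsDrinfeldRankOne L φ) (g : G) (hg : ∀ y ∈ L, g y = y)
    (f : Polynomial Fq) (x : Kbar) : g (φ f x) = φ f (g x) := by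
  obtain ⟨a, haL, -, hX, hC⟩ := hφ
  induction f using Polynomial.induction_on generalizing x with
  | C c =>
    rw [hC, map_mul, hC, hg _ (IntermediateField.algebraMap_mem L _)]
  | add p q hp hq =>
    rw [phi_add_apply, map_add, hp, hq, phi_add_apply]
  | monomial n c ih =>
    have e : (C c * X ^ (n + 1) : Polynomial Fq) = (C c * X ^ n) * X := by ring
    have hbase : ∀ y : Kbar, g (φ X y) = φ X (g y) := by
      intro y
      rw [hX, map_add, map_mul, map_mul, map_pow, hX,
        hg _ (IntermediateField.algebraMap_mem L _), hg _ haL]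
    rw [e, phi_mul_apply, ih, hbase, ← phi_mul_apply]

lemma mem_of_mem_base {E : IntermediateField (↥L) Kbar} {y : Kbar} (hy : y ∈ L) : y ∈ E :=
  E.algebraMap_mem ⟨y, hy⟩

lemma phi_mem (hφ : IsDrinfeldRankOne L φ) (E : IntermediateField (↥L) Kbar)
    (f : Polynomial Fq) (x : Kbar) (hx : x ∈ E) : φ f x ∈ E := by
  obtain ⟨a, haL, -, hX, hC⟩ := hφ
  induction f using Polynomial.induction_on generalizing x with
  | C c =>
    rw [hC]
    exact mul_mem (mem_of_mem_base (IntermediateField.algebraMap_mem L _)) hx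
  | add p q hp hq =>
    rw [phi_add_apply]; exact add_mem (hp x hx) (hq x hx)
  | monomial n c ih =>
    have e : (C c * X ^ (n + 1) : Polynomial Fq) = (C c * X ^ n) * X := by ring
    rw [e, phi_mul_apply]
    refine ih _ ?_
    rw [hX]
    exact add_mem (mul_mem (mem_of_mem_base (IntermediateField.algebraMap_mem L _)) hx)
      (mul_mem (mem_of_mem_base haL) (pow_mem hx _))

lemma phi_mod {l f g : Polynomial Fq} (h : l ∣ f - g) (x : Kbar) (hx : φ l x = 0) :
    φ f x = φ g x := by
  obtain ⟨d, hd⟩ := h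
  have e : f = g + d * l := by linear_combination hd
  rw [e, phi_add_apply, phi_mul_apply, hx, map_zero, add_zero]

lemma normal_LK : Normal (↥L) (AlgebraicClosure (RatFunc Fq)) := by
  haveI : Algebra.IsAlgebraic (↥L) Kbar := Algebra.IsAlgebraic.tower_top (K := RatFunc Fq) (↥L)
  haveI : IsAlgClosure (↥L) Kbar := ⟨inferInstance, inferInstance⟩
  exact IsAlgClosure.normal (↥L) Kbar

end DrinAux
section DrinAux2

variable {Fq : Type} [Field Fq] [Fintype Fq]

local notation "Kbar" => AlgebraicClosure (RatFunc Fq)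

variable {L : IntermediateField (RatFunc Fq) (AlgebraicClosure (RatFunc Fq))}
  {φ : Polynomial Fq →+* AddMonoid.End (AlgebraicClosure (RatFunc Fq))}
  {E : IntermediateField (↥L) (AlgebraicClosure (RatFunc Fq))}

lemma fix_L_elt (τ : ↥E ≃ₐ[↥L] ↥E) (y : Kbar) (hy : y ∈ L) (hyE : y ∈ E) :
    τ ⟨y, hyE⟩ = ⟨y, hyE⟩ := by
  have h : (⟨y, hyE⟩ : ↥E) = algebraMap (↥L) (↥E) ⟨y, hy⟩ := rfl
  rw [h, AlgEquiv.commutes]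

lemma phi_comm_E (hφ : IsDrinfeldRankOne L φ) (τ : ↥E ≃ₐ[↥L] ↥E) (f : Polynomial Fq)
    (x : ↥E) (h : φ f (x : Kbar) ∈ E) :
    ((τ ⟨φ f (x : Kbar), h⟩ : ↥E) : Kbar) = φ f ((τ x : ↥E) : Kbar) := by
  haveI := normal_LK (L := L)
  set t := τ.liftNormal Kbar with ht
  have key : ∀ y : ↥E, t (y : Kbar) = ((τ y : ↥E) : Kbar) := fun y =>
    τ.liftNormal_commutes Kbar y
  have hfix : ∀ y ∈ L, t y = y := by
    intro y hy
    have : (y : Kbar) = algebraMap (↥L) Kbar ⟨y, hy⟩ := rfl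
    rw [this, AlgEquiv.commutes]
  calc ((τ ⟨φ f (x : Kbar), h⟩ : ↥E) : Kbar)
      = t (φ f (x : Kbar)) := (key ⟨φ f (x : Kbar), h⟩).symm
    _ = φ f (t (x : Kbar)) := phi_comm hφ t hfix f _
    _ = φ f ((τ x : ↥E) : Kbar) := by rw [key]

lemma lambda_torsion (hφ : IsDrinfeldRankOne L φ) {l : Polynomial Fq}
    (τ : ↥E ≃ₐ[↥L] ↥E) (x : ↥E) (hxL : φ l (x : Kbar) ∈ L) :
    φ l (((τ x : ↥E) : Kbar) - (x : Kbar)) = 0 := by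
  have hmem : φ l (x : Kbar) ∈ E := phi_mem hφ E l _ x.2
  have h1 : φ l ((τ x : ↥E) : Kbar) = φ l (x : Kbar) := by
    rw [← phi_comm_E hφ τ l x hmem, fix_L_elt τ _ hxL hmem]
  rw [map_sub, h1, sub_self]

lemma lambda_shift {l : Polynomial Fq} (τ : ↥E ≃ₐ[↥L] ↥E) (hτ : FixesTorsionD φ l τ)
    (α β : ↥E) (h : φ l ((β : Kbar) - (α : Kbar)) = 0) :
    ((τ β : ↥E) : Kbar) - (β : Kbar) = ((τ α : ↥E) : Kbar) - (α : Kbar) := by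
  have hβ : β = α + (β - α) := by ring
  have hμ : φ l ((β - α : ↥E) : Kbar) = 0 := by push_cast; exact h
  have : τ β = τ α + (β - α) := by
    rw [hβ, map_add, hτ _ hμ]; ring
  rw [this]; push_cast; ring

lemma ext_on_S {S : Set Kbar} (hE : E = IntermediateField.adjoin (↥L) S)
    (ρ₁ ρ₂ : ↥E ≃ₐ[↥L] ↥E)
    (h : ∀ (x : Kbar) (hx : x ∈ S) (hxE : x ∈ E),
      ((ρ₁ ⟨x, hxE⟩ : ↥E) : Kbar) = ((ρ₂ ⟨x, hxE⟩ : ↥E) : Kbar)) : ρ₁ = ρ₂ := by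
  have hmem : ∀ y : Kbar, y ∈ IntermediateField.adjoin (↥L) S → y ∈ E := fun y hy =>
    hE ▸ hy
  have key : ∀ (y : Kbar) (hy : y ∈ IntermediateField.adjoin (↥L) S) (hyE : y ∈ E),
      ρ₁ ⟨y, hyE⟩ = ρ₂ ⟨y, hyE⟩ := by
    intro y hy
    induction hy using IntermediateField.adjoin_induction with
    | mem x hx => intro hxE; exact Subtype.ext (h x hx hxE)
    | algebraMap r =>
      intro hxE
      have : (⟨algebraMap (↥L) Kbar r, hxE⟩ : ↥E) = algebraMap (↥L) (↥E) r := rfl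
      rw [this, AlgEquiv.commutes, AlgEquiv.commutes]
    | add x y hx hy ihx ihy =>
      intro hxE
      have hx' : x ∈ E := hmem x hx
      have hy' : y ∈ E := hmem y hy
      have : (⟨x + y, hxE⟩ : ↥E) = ⟨x, hx'⟩ + ⟨y, hy'⟩ := rfl
      rw [this, map_add, map_add, ihx hx', ihy hy']
    | inv x hx ih =>
      intro hxE
      have hx' : x ∈ E := hmem x hx
      have : (⟨x⁻¹, hxE⟩ : ↥E) = (⟨x, hx'⟩ : ↥E)⁻¹ := by
        ext; rw [IntermediateField.coe_inv]
      rw [this, map_inv₀, map_inv₀, ih hx']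
    | mul x y hx hy ihx ihy =>
      intro hxE
      have hx' : x ∈ E := hmem x hx
      have hy' : y ∈ E := hmem y hy
      have : (⟨x * y, hxE⟩ : ↥E) = ⟨x, hx'⟩ * ⟨y, hy'⟩ := rfl
      rw [this, map_mul, map_mul, ihx hx', ihy hy']
  ext x
  exact congrArg _ (key (x : Kbar) (hE ▸ x.2) x.2)

end DrinAux2
section DrinAux3

variable {Fq : Type} [Field Fq] [Fintype Fq]

local notation "Kbar" => AlgebraicClosure (RatFunc Fq)

variable {L : IntermediateField (RatFunc Fq) (AlgebraicClosure (RatFunc Fq))}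
  {φ : Polynomial Fq →+* AddMonoid.End (AlgebraicClosure (RatFunc Fq))}
  {E : IntermediateField (↥L) (AlgebraicClosure (RatFunc Fq))}
  {l : Polynomial Fq} {S : Set (AlgebraicClosure (RatFunc Fq))}

lemma fix_L_glob (w : Kbar ≃ₐ[↥L] Kbar) (y : Kbar) (hy : y ∈ L) : w y = y := by
  have : (y : Kbar) = algebraMap (↥L) Kbar ⟨y, hy⟩ := rfl
  rw [this, AlgEquiv.commutes]

lemma exists_extension (hφ : IsDrinfeldRankOne L φ)
    (hE : E = IntermediateField.adjoin (↥L) S)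
    (hSfib : ∀ x ∈ S, ∀ y : Kbar, φ l y = φ l x → y ∈ S)
    (hSL : ∀ x ∈ S, φ l x ∈ L)
    {Ll : IntermediateField (↥L) (AlgebraicClosure (RatFunc Fq))}
    (hLl : Ll = IntermediateField.adjoin (↥L) {x : Kbar | φ l x = 0})
    (hGal : GaloisGroupOfTorsionIsFull φ l Ll)
    (u : Polynomial Fq) (hu : ¬ l ∣ u) :
    ∃ s : ↥E ≃ₐ[↥L] ↥E, ExtendsSigmaD φ l s u := by
  haveI := normal_LK (L := L)
  obtain ⟨σ, hσ⟩ := hGal.2 u hu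
  set t := σ.liftNormal Kbar with htdef
  have keyt : ∀ y : ↥Ll, t (y : Kbar) = ((σ y : ↥Ll) : Kbar) := fun y =>
    σ.liftNormal_commutes Kbar y
  have hstab : ∀ (w : Kbar ≃ₐ[↥L] Kbar), ∀ x ∈ E, w x ∈ E := by
    intro w x hx
    have himg : E.map w.toAlgHom ≤ E := by
      conv_rhs => rw [hE]
      rw [hE, IntermediateField.adjoin_map]
      refine IntermediateField.adjoin.mono _ _ _ ?_
      rintro _ ⟨y, hy, rfl⟩
      refine hSfib y hy _ ?_
      show φ l (w y) = φ l y
      rw [← phi_comm hφ w (fun z hz => fix_L_glob w z hz) l y,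
        fix_L_glob w _ (hSL y hy)]
    exact himg ⟨x, hx, rfl⟩
  refine ⟨{ toFun := fun x => ⟨t (x : Kbar), hstab t _ x.2⟩
            invFun := fun x => ⟨t.symm (x : Kbar), hstab t.symm _ x.2⟩
            left_inv := fun x => Subtype.ext (by simp)
            right_inv := fun x => Subtype.ext (by simp)
            map_mul' := fun x y => Subtype.ext (by push_cast; exact map_mul t _ _)
            map_add' := fun x y => Subtype.ext (by push_cast; exact map_add t _ _)
            commutes' := fun r => Subtype.ext (by
              show t ((algebraMap (↥L) (↥E) r : ↥E) : Kbar) = _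
              have : ((algebraMap (↥L) (↥E) r : ↥E) : Kbar) = algebraMap (↥L) Kbar r := rfl
              rw [this, AlgEquiv.commutes]) }, ?_⟩
  intro x hx
  show t (x : Kbar) = φ u (x : Kbar)
  have hxLl : (x : Kbar) ∈ Ll := by
    rw [hLl]; exact IntermediateField.subset_adjoin _ _ hx
  have h1 : (x : Kbar) = ((⟨(x : Kbar), hxLl⟩ : ↥Ll) : Kbar) := rfl
  rw [h1, keyt ⟨(x : Kbar), hxLl⟩]
  exact hσ ⟨(x : Kbar), hxLl⟩ hx

end DrinAux3
section DrinAux4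

variable {Fq : Type} [Field Fq] [Fintype Fq]

local notation "Kbar" => AlgebraicClosure (RatFunc Fq)

variable {L : IntermediateField (RatFunc Fq) (AlgebraicClosure (RatFunc Fq))}
  {φ : Polynomial Fq →+* AddMonoid.End (AlgebraicClosure (RatFunc Fq))}
  {E : IntermediateField (↥L) (AlgebraicClosure (RatFunc Fq))}
  {l : Polynomial Fq} {S : Set (AlgebraicClosure (RatFunc Fq))}

lemma aut_inv_apply (s : ↥E ≃ₐ[↥L] ↥E) (x : ↥E) : s⁻¹ x = s.symm x := rfl

lemma conj_fixes (hφ : IsDrinfeldRankOne L φ) (s τ : ↥E ≃ₐ[↥L] ↥E)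
    (hτ : FixesTorsionD φ l τ) : FixesTorsionD φ l (s * τ * s⁻¹) := by
  intro x hx
  have hmem : φ l (x : Kbar) ∈ E := phi_mem hφ E l _ x.2
  have hγ : φ l ((s⁻¹ x : ↥E) : Kbar) = 0 := by
    rw [aut_inv_apply, ← phi_comm_E hφ s.symm l x hmem]
    have : (⟨φ l (x : Kbar), hmem⟩ : ↥E) = 0 := Subtype.ext hx
    rw [this, map_zero]
    rfl
  rw [AlgEquiv.mul_apply, AlgEquiv.mul_apply, hτ _ hγ, aut_inv_apply,
    AlgEquiv.apply_symm_apply]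

lemma conj_formula (hφ : IsDrinfeldRankOne L φ)
    (hSL : ∀ x ∈ S, φ l x ∈ L)
    (s τ : ↥E ≃ₐ[↥L] ↥E) (u : Polynomial Fq)
    (hs : ExtendsSigmaD φ l s u) (hτ : FixesTorsionD φ l τ)
    (β : ↥E) (hβ : (β : Kbar) ∈ S) :
    (((s * τ * s⁻¹) β : ↥E) : Kbar) = (β : Kbar) + φ u (((τ β : ↥E) : Kbar) - (β : Kbar)) := by
  have hβL : φ l (β : Kbar) ∈ L := hSL _ hβ
  have hmem : φ l (β : Kbar) ∈ E := phi_mem hφ E l _ β.2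
  set γ : ↥E := s⁻¹ β with hγdef
  have hγ : φ l (γ : Kbar) = φ l (β : Kbar) := by
    rw [hγdef, aut_inv_apply, ← phi_comm_E hφ s.symm l β hmem,
      fix_L_elt s.symm _ hβL hmem]
  set lam : ↥E := τ β - β with hlamdef
  have hlam : φ l ((lam : ↥E) : Kbar) = 0 := by
    have := lambda_torsion hφ (l := l) τ β hβL
    rw [hlamdef]; push_cast; exact this
  have hτγ : τ γ = γ + lam := by
    have h1 := lambda_shift (φ := φ) τ hτ β γ (by rw [map_sub, hγ, sub_self])
    have h2 : ((τ γ : ↥E) : Kbar) = (γ : Kbar) + ((lam : ↥E) : Kbar) := by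
      rw [hlamdef]; push_cast; rw [sub_eq_iff_eq_add] at h1; rw [h1]; ring
    exact Subtype.ext (by push_cast at h2 ⊢; exact h2)
  have : (s * τ * s⁻¹) β = s (τ γ) := by
    rw [AlgEquiv.mul_apply, AlgEquiv.mul_apply]
  rw [this, hτγ, map_add]
  have hsγ : s γ = β := by rw [hγdef, aut_inv_apply, AlgEquiv.apply_symm_apply]
  have hslam : ((s lam : ↥E) : Kbar) = φ u ((lam : ↥E) : Kbar) := hs lam hlam
  push_cast
  rw [hsγ, hslam, hlamdef]
  push_cast
  ring_nf

lemma mul_fixes (ρ₁ ρ₂ : ↥E ≃ₐ[↥L] ↥E) (h₁ : FixesTorsionD φ l ρ₁)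
    (h₂ : FixesTorsionD φ l ρ₂) : FixesTorsionD φ l (ρ₁ * ρ₂) := by
  intro x hx
  rw [AlgEquiv.mul_apply, h₂ _ hx, h₁ _ hx]

lemma prod_formula (hφ : IsDrinfeldRankOne L φ)
    (hSfib : ∀ x ∈ S, ∀ y : Kbar, φ l y = φ l x → y ∈ S)
    (hSL : ∀ x ∈ S, φ l x ∈ L)
    (τ : ↥E ≃ₐ[↥L] ↥E) (hτ : FixesTorsionD φ l τ) :
    ∀ (lst : List ((↥E ≃ₐ[↥L] ↥E) × Polynomial Fq)),
      (∀ p ∈ lst, ExtendsSigmaD φ l p.1 p.2) →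
      ∀ (β : ↥E), (β : Kbar) ∈ S →
        ((((lst.map fun p => p.1 * τ * p.1⁻¹).prod) β : ↥E) : Kbar)
          = (β : Kbar) + φ (lst.map Prod.snd).sum (((τ β : ↥E) : Kbar) - (β : Kbar)) := by
  intro lst
  induction lst with
  | nil =>
    intro _ β hβ
    simp only [List.map_nil, List.prod_nil, List.sum_nil]
    rw [map_zero]
    show (β : Kbar) = (β : Kbar) + (0 : AddMonoid.End Kbar) _
    simp
  | cons p rest ih =>
    intro hext β hβ
    have hβL : φ l (β : Kbar) ∈ L := hSL _ hβ
    set lam := ((τ β : ↥E) : Kbar) - (β : Kbar) with hlamdef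
    have hlam : φ l lam = 0 := lambda_torsion hφ (l := l) τ β hβL
    set Sg := (rest.map Prod.snd).sum with hSgdef
    have hphil : φ l (φ Sg lam) = 0 := by
      rw [← phi_mul_apply, mul_comm, phi_mul_apply, hlam, map_zero]
    set β' := ((rest.map fun p => p.1 * τ * p.1⁻¹).prod) β with hβ'def
    have h1 : (β' : Kbar) = (β : Kbar) + φ Sg lam :=
      ih (fun q hq => hext q (List.mem_cons_of_mem p hq)) β hβ
    have hβ'S : (β' : Kbar) ∈ S := by
      refine hSfib _ hβ _ ?_
      rw [h1, map_add, hphil, add_zero]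
    have hshift : ((τ β' : ↥E) : Kbar) - (β' : Kbar) = lam := by
      rw [lambda_shift (φ := φ) τ hτ β β' (by rw [h1]; simpa using hphil)]
    have h2 := conj_formula hφ hSL p.1 τ p.2 (hext p List.mem_cons_self) hτ β' hβ'S
    rw [List.map_cons, List.prod_cons, AlgEquiv.mul_apply, ← hβ'def, h2, hshift, h1,
      List.map_cons, List.sum_cons, phi_add_apply]
    ring

end DrinAux4
section DrinAux5

variable {Fq : Type} [Field Fq] [Fintype Fq]

local notation "Kbar" => AlgebraicClosure (RatFunc Fq)

theorem aux_main {L : IntermediateField (RatFunc Fq) (AlgebraicClosure (RatFunc Fq))}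
    {φ : Polynomial Fq →+* AddMonoid.End (AlgebraicClosure (RatFunc Fq))}
    (hφ : IsDrinfeldRankOne L φ) {l : Polynomial Fq} (hlirr : Irreducible l)
    {Ll : IntermediateField (↥L) (AlgebraicClosure (RatFunc Fq))}
    (hLl : Ll = IntermediateField.adjoin (↥L) {x : Kbar | φ l x = 0})
    (hGal : GaloisGroupOfTorsionIsFull φ l Ll)
    {E : IntermediateField (↥L) (AlgebraicClosure (RatFunc Fq))}
    {S : Set (AlgebraicClosure (RatFunc Fq))}
    (hE : E = IntermediateField.adjoin (↥L) S)
    (hS0 : ∀ x : Kbar, φ l x = 0 → x ∈ S)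
    (hSfib : ∀ x ∈ S, ∀ y : Kbar, φ l y = φ l x → y ∈ S)
    (hSL : ∀ x ∈ S, φ l x ∈ L) :
    ∃ c : Polynomial Fq → (↥E ≃ₐ[↥L] ↥E) → (↥E ≃ₐ[↥L] ↥E),
      IsDecompConjActionD φ l c ∧
      (∀ c', IsDecompConjActionD φ l c' →
        ∀ f τ, FixesTorsionD φ l τ → c' f τ = c f τ) ∧
      (∀ f τ, FixesTorsionD φ l τ → FixesTorsionD φ l (c f τ)) ∧
      (∀ f τ τ', FixesTorsionD φ l τ → FixesTorsionD φ l τ' →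
        c f (τ * τ') = c f τ * c f τ') ∧
      (∀ f g τ, FixesTorsionD φ l τ → c (f + g) τ = c f τ * c g τ) ∧
      (∀ f g τ, FixesTorsionD φ l τ → c (f * g) τ = c f (c g τ)) ∧
      (∀ τ, FixesTorsionD φ l τ → c 1 τ = τ) ∧
      (∀ τ, FixesTorsionD φ l τ → c l τ = 1) ∧
      (∀ f τ, FixesTorsionD φ l τ → ∀ α : ↥E, (α : Kbar) ∈ S →
        ((c f τ α : ↥E) : Kbar)
          = (α : Kbar) + φ f (((τ α : ↥E) : Kbar) - (α : Kbar))) := by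
  classical
  have hex : ∀ u : Polynomial Fq, ¬ l ∣ u → ∃ s : ↥E ≃ₐ[↥L] ↥E, ExtendsSigmaD φ l s u :=
    exists_extension hφ hE hSfib hSL hLl hGal
  choose sOf hsOf using hex
  have hnd1 : ¬ l ∣ (1 : Polynomial Fq) := fun h => hlirr.not_isUnit (isUnit_of_dvd_one h)
  have hfd : ∀ f : Polynomial Fq, l ∣ f → ¬ l ∣ (f - 1) := by
    intro f hdf hd1
    exact hnd1 (by simpa using dvd_sub hdf hd1)
  set c : Polynomial Fq → (↥E ≃ₐ[↥L] ↥E) → (↥E ≃ₐ[↥L] ↥E) := fun f τ =>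
    if hτ : FixesTorsionD φ l τ then
      (if hd : l ∣ f then
        (sOf (f-1) (hfd f hd) * τ * (sOf (f-1) (hfd f hd))⁻¹) *
        ((sOf 1 hnd1 * τ * (sOf 1 hnd1)⁻¹) * 1)
      else (sOf f hd * τ * (sOf f hd)⁻¹) * 1)
    else τ with hcdef
  -- the value of `c f τ` on generators
  have hchar : ∀ (f : Polynomial Fq) (τ : ↥E ≃ₐ[↥L] ↥E), FixesTorsionD φ l τ →
      ∀ α : ↥E, (α : Kbar) ∈ S →
        ((c f τ α : ↥E) : Kbar)
          = (α : Kbar) + φ f (((τ α : ↥E) : Kbar) - (α : Kbar)) := by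
    intro f τ hτ α hα
    rw [hcdef]
    simp only [dif_pos hτ]
    by_cases hd : l ∣ f
    · simp only [dif_pos hd]
      have h2 := prod_formula hφ hSfib hSL τ hτ
        [(sOf (f-1) (hfd f hd), f-1), (sOf 1 hnd1, 1)]
        (by
          intro p hp
          simp only [List.mem_cons, List.not_mem_nil, or_false] at hp
          rcases hp with rfl | rfl
          · exact hsOf _ _
          · exact hsOf _ _) α hα
      simp only [List.map_cons, List.map_nil, List.prod_cons, List.prod_nil,
        List.sum_cons, List.sum_nil, add_zero] at h2
      rw [h2, show f - 1 + 1 = f by ring]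
    · simp only [dif_neg hd]
      have h2 := prod_formula hφ hSfib hSL τ hτ [(sOf f hd, f)]
        (by
          intro p hp
          simp only [List.mem_cons, List.not_mem_nil, or_false] at hp
          rcases hp with rfl
          exact hsOf _ _) α hα
      simp only [List.map_cons, List.map_nil, List.prod_cons, List.prod_nil,
        List.sum_cons, List.sum_nil, add_zero] at h2
      rw [h2]
  have hfixc : ∀ (f : Polynomial Fq) (τ : ↥E ≃ₐ[↥L] ↥E), FixesTorsionD φ l τ →
      FixesTorsionD φ l (c f τ) := by
    intro f τ hτ
    rw [hcdef]
    simp only [dif_pos hτ]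
    by_cases hd : l ∣ f
    · simp only [dif_pos hd]
      exact mul_fixes _ _ (conj_fixes hφ _ _ hτ)
        (mul_fixes _ _ (conj_fixes hφ _ _ hτ) (fun x hx => rfl))
    · simp only [dif_neg hd]
      exact mul_fixes _ _ (conj_fixes hφ _ _ hτ) (fun x hx => rfl)
  have huniq : ∀ (ρ : ↥E ≃ₐ[↥L] ↥E) (f : Polynomial Fq) (τ : ↥E ≃ₐ[↥L] ↥E),
      FixesTorsionD φ l τ →
      (∀ α : ↥E, (α : Kbar) ∈ S →
        ((ρ α : ↥E) : Kbar) = (α : Kbar) + φ f (((τ α : ↥E) : Kbar) - (α : Kbar))) →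
      ρ = c f τ := by
    intro ρ f τ hτ hv
    refine ext_on_S hE ρ (c f τ) ?_
    intro x hx hxE
    rw [hv ⟨x, hxE⟩ hx, hchar f τ hτ ⟨x, hxE⟩ hx]
  have hdecomp : IsDecompConjActionD φ l c := by
    intro f τ hτ n g hg hdvd s hs
    set lst : List ((↥E ≃ₐ[↥L] ↥E) × Polynomial Fq) := List.ofFn (fun i => (s i, g i))
      with hlst
    have hmap : List.ofFn (fun i => s i * τ * (s i)⁻¹)
        = lst.map (fun p => p.1 * τ * p.1⁻¹) := by
      rw [hlst, List.map_ofFn]; rfl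
    have hmem : ∀ p ∈ lst, ExtendsSigmaD φ l p.1 p.2 := by
      rw [hlst]
      intro p hp
      rw [List.mem_ofFn] at hp
      obtain ⟨i, rfl⟩ := hp
      exact hs i
    have hsum : (lst.map Prod.snd).sum = ∑ i, g i := by
      rw [hlst, List.map_ofFn]
      exact List.sum_ofFn
    rw [hmap]
    symm
    refine huniq _ f τ hτ ?_
    intro α hα
    have hlam : φ l (((τ α : ↥E) : Kbar) - (α : Kbar)) = 0 :=
      lambda_torsion hφ (l := l) τ α (hSL _ hα)
    have h2 := prod_formula hφ hSfib hSL τ hτ lst hmem α hα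
    rw [h2, hsum, phi_mod hdvd _ hlam]
  refine ⟨c, hdecomp, ?_, hfixc, ?_, ?_, ?_, ?_, ?_, hchar⟩
  · -- uniqueness of the action
    intro c' hc' f τ hτ
    by_cases hd : l ∣ f
    · set g : Fin 2 → Polynomial Fq := fun i => if i = 0 then f - 1 else 1 with hgdef
      set s : Fin 2 → (↥E ≃ₐ[↥L] ↥E) :=
        fun i => if i = 0 then sOf (f-1) (hfd f hd) else sOf 1 hnd1 with hsdef
      have hcop : ∀ i, IsCoprime (g i) l := by
        intro i
        fin_cases i
        · simpa [hgdef] using (hlirr.coprime_iff_not_dvd.mpr (hfd f hd)).symm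
        · simpa [hgdef] using (hlirr.coprime_iff_not_dvd.mpr hnd1).symm
      have hdvd2 : l ∣ f - ∑ i, g i := by
        have he : f - ∑ i, g i = 0 := by
          rw [Fin.sum_univ_two]
          simp only [hgdef]
          norm_num
        rw [he]
        exact dvd_zero l
      have hexts : ∀ i, ExtendsSigmaD φ l (s i) (g i) := by
        intro i
        fin_cases i
        · simpa [hgdef, hsdef] using hsOf (f - 1) (hfd f hd)
        · simpa [hgdef, hsdef] using hsOf 1 hnd1
      rw [hc' f τ hτ 2 g hcop hdvd2 s hexts, hdecomp f τ hτ 2 g hcop hdvd2 s hexts]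
    · set g : Fin 1 → Polynomial Fq := fun _ => f with hgdef
      set s : Fin 1 → (↥E ≃ₐ[↥L] ↥E) := fun _ => sOf f hd with hsdef
      have hcop : ∀ i, IsCoprime (g i) l := fun i =>
        (hlirr.coprime_iff_not_dvd.mpr hd).symm
      have hdvd2 : l ∣ f - ∑ i, g i := by
        rw [Fin.sum_univ_one]
        simp [hgdef]
      have hexts : ∀ i, ExtendsSigmaD φ l (s i) (g i) := fun i => hsOf _ _
      rw [hc' f τ hτ 1 g hcop hdvd2 s hexts, hdecomp f τ hτ 1 g hcop hdvd2 s hexts]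
  · -- multiplicative in τ
    intro f τ τ' hτ hτ'
    have hττ' : FixesTorsionD φ l (τ * τ') := mul_fixes τ τ' hτ hτ'
    refine (huniq (c f τ * c f τ') f (τ * τ') hττ' ?_).symm
    intro α hα
    have hαL := hSL _ hα
    set lam' : ↥E := τ' α - α with hlam'def
    have hlam'c : ((lam' : ↥E) : Kbar) = ((τ' α : ↥E) : Kbar) - (α : Kbar) := by
      rw [hlam'def]; push_cast; ring
    have hlam't : φ l ((lam' : ↥E) : Kbar) = 0 := by
      rw [hlam'c]; exact lambda_torsion hφ (l := l) τ' α hαL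
    have hβv := hchar f τ' hτ' α hα
    set β : ↥E := c f τ' α with hβdef
    have h0 : φ l (φ f (((τ' α : ↥E) : Kbar) - (α : Kbar))) = 0 := by
      rw [← phi_mul_apply, mul_comm, phi_mul_apply, ← hlam'c, hlam't, map_zero]
    have hβS : (β : Kbar) ∈ S := by
      refine hSfib _ hα _ ?_
      rw [hβv, map_add, h0, add_zero]
    have hshift : ((τ β : ↥E) : Kbar) - (β : Kbar)
        = ((τ α : ↥E) : Kbar) - (α : Kbar) := by
      refine lambda_shift (φ := φ) τ hτ α β ?_
      rw [hβv, show (α : Kbar) + φ f (((τ' α : ↥E) : Kbar) - (α : Kbar)) - (α : Kbar)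
        = φ f (((τ' α : ↥E) : Kbar) - (α : Kbar)) by ring]
      exact h0
    have hmulval : ((τ * τ') α : ↥E) = τ α + lam' := by
      rw [AlgEquiv.mul_apply, show τ' α = α + lam' by rw [hlam'def]; ring,
        map_add, hτ lam' hlam't]
    rw [AlgEquiv.mul_apply, hchar f τ hτ β hβS, hshift, hβv, hmulval]
    push_cast
    rw [hlam'c]
    rw [show ((τ α : ↥E) : Kbar) + (((τ' α : ↥E) : Kbar) - (α : Kbar)) - (α : Kbar)
      = (((τ α : ↥E) : Kbar) - (α : Kbar)) + (((τ' α : ↥E) : Kbar) - (α : Kbar)) by ring,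
      map_add]
    ring
  · -- additive in f
    intro f g τ hτ
    refine (huniq (c f τ * c g τ) (f + g) τ hτ ?_).symm
    intro α hα
    have hαL := hSL _ hα
    set lam := ((τ α : ↥E) : Kbar) - (α : Kbar) with hlamdef
    have hlamt : φ l lam = 0 := lambda_torsion hφ (l := l) τ α hαL
    have hβv := hchar g τ hτ α hα
    set β : ↥E := c g τ α with hβdef
    have h0 : φ l (φ g lam) = 0 := by
      rw [← phi_mul_apply, mul_comm, phi_mul_apply, hlamt, map_zero]
    have hβS : (β : Kbar) ∈ S := by
      refine hSfib _ hα _ ?_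
      rw [hβv, map_add, h0, add_zero]
    have hshift : ((τ β : ↥E) : Kbar) - (β : Kbar) = lam := by
      refine lambda_shift (φ := φ) τ hτ α β ?_
      rw [hβv, show (α : Kbar) + φ g lam - (α : Kbar) = φ g lam by ring]
      exact h0
    rw [AlgEquiv.mul_apply, hchar f τ hτ β hβS, hshift, hβv, phi_add_apply]
    ring
  · -- multiplicative in f
    intro f g τ hτ
    refine (huniq (c f (c g τ)) (f * g) τ hτ ?_).symm
    intro α hα
    have h1 := hchar f (c g τ) (hfixc g τ hτ) α hα
    rw [h1, hchar g τ hτ α hα]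
    rw [show (α : Kbar) + φ g (((τ α : ↥E) : Kbar) - (α : Kbar)) - (α : Kbar)
      = φ g (((τ α : ↥E) : Kbar) - (α : Kbar)) by ring, ← phi_mul_apply]
  · -- c 1 τ = τ
    intro τ hτ
    refine (huniq τ 1 τ hτ ?_).symm
    intro α hα
    rw [map_one]
    show ((τ α : ↥E) : Kbar) = (α : Kbar) + (1 : AddMonoid.End Kbar) _
    simp
  · -- c l τ = 1
    intro τ hτ
    refine (huniq 1 l τ hτ ?_).symm
    intro α hα
    rw [lambda_torsion hφ (l := l) τ α (hSL _ hα), AlgEquiv.one_apply, add_zero]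

end DrinAux5
/-- **Proposition 3.1.**
Let `l` be a monic irreducible polynomial of `A` such that `φ` has good reduction at
the primes of `L` lying over `l` and `l` is unramified in the maximal separable
subextension `L_s/k` (encoded by `GaloisGroupOfTorsionIsFull`).  Then:
(1) the `A`-action defined by `a · ψ_λ = ψ_{φ_a(λ)}` — via decompositions
`a ≡ Σ a_i (mod l)` with `gcd(a_i, l) = 1` and the conjugation action of
`Gal(L_l/L)` — is well-defined and gives an `A`-module structure on
`H_{l,z} = Gal(L_{l,z}/L_l)`, and consequently on `H_{l,Γ} = Gal(L_{l,Γ}/L_l)`;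
(2) the image `H_l` of `H_{l,z}` in `Λ_l^φ` is an `A`-submodule of `Λ_l^φ`, `H_{l,z}`
and `H_l` are isomorphic as `A`-modules, and `H_{l,z}` and `H_{l,Γ}` are `A`-modules of
exponent `l` (annihilated by `l`). -/
theorem drinfeld_module_structure_on_kummer_galois_group
    {Fq : Type} [Field Fq] [Fintype Fq]
    (L : IntermediateField (RatFunc Fq) (AlgebraicClosure (RatFunc Fq)))
    [FiniteDimensional (RatFunc Fq) (↥L)]
    (φ : Polynomial Fq →+* AddMonoid.End (AlgebraicClosure (RatFunc Fq)))
    (hφ : IsDrinfeldRankOne L φ)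
    (l : Polynomial Fq) (hlm : l.Monic) (hlirr : Irreducible l)
    -- conditions (a) and (b) on l, via the resulting description of Gal(L_l/L)
    (Ll : IntermediateField (↥L) (AlgebraicClosure (RatFunc Fq)))
    (hLl : Ll = adjoin (↥L) {x | φ l x = 0})
    (hGal : GaloisGroupOfTorsionIsFull φ l Ll)
    -- the element z ∈ L and the splitting field L_{l,z} of φ_l(u) - z over L
    (z : AlgebraicClosure (RatFunc Fq)) (hz : z ∈ L)
    (Ez : IntermediateField (↥L) (AlgebraicClosure (RatFunc Fq)))
    (hEz : Ez = adjoin (↥L) ({x | φ l x = 0} ∪ {x | φ l x = z}))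
    -- Γ : an A-submodule of (L, +)
    (Γ : AddSubgroup (AlgebraicClosure (RatFunc Fq)))
    (hΓL : ∀ x ∈ Γ, x ∈ L)
    (hΓA : ∀ (f : Polynomial Fq), ∀ x ∈ Γ, φ f x ∈ Γ)
    -- L_{l,Γ} = L(Λ_l^φ, (1/l)Γ)
    (EΓ : IntermediateField (↥L) (AlgebraicClosure (RatFunc Fq)))
    (hEΓ : EΓ = adjoin (↥L) {x | φ l x ∈ Γ}) :
    -- (1) for H_{l,Γ} :
    (∃ c : Polynomial Fq → (↥EΓ ≃ₐ[↥L] ↥EΓ) → (↥EΓ ≃ₐ[↥L] ↥EΓ),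
      IsDecompConjActionD φ l c ∧
      (∀ c', IsDecompConjActionD φ l c' →
        ∀ f τ, FixesTorsionD φ l τ → c' f τ = c f τ) ∧
      (∀ f τ, FixesTorsionD φ l τ → FixesTorsionD φ l (c f τ)) ∧
      (∀ f τ τ', FixesTorsionD φ l τ → FixesTorsionD φ l τ' →
        c f (τ * τ') = c f τ * c f τ') ∧
      (∀ f g τ, FixesTorsionD φ l τ → c (f + g) τ = c f τ * c g τ) ∧
      (∀ f g τ, FixesTorsionD φ l τ → c (f * g) τ = c f (c g τ)) ∧
      (∀ τ, FixesTorsionD φ l τ → c 1 τ = τ) ∧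
      (∀ τ, FixesTorsionD φ l τ → c l τ = 1)) ∧
    -- (1),(2) for H_{l,z} :
    (∃ c : Polynomial Fq → (↥Ez ≃ₐ[↥L] ↥Ez) → (↥Ez ≃ₐ[↥L] ↥Ez),
      IsDecompConjActionD φ l c ∧
      (∀ c', IsDecompConjActionD φ l c' →
        ∀ f τ, FixesTorsionD φ l τ → c' f τ = c f τ) ∧
      (∀ f τ, FixesTorsionD φ l τ → FixesTorsionD φ l (c f τ)) ∧
      (∀ f τ τ', FixesTorsionD φ l τ → FixesTorsionD φ l τ' →
        c f (τ * τ') = c f τ * c f τ') ∧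
      (∀ f g τ, FixesTorsionD φ l τ → c (f + g) τ = c f τ * c g τ) ∧
      (∀ f g τ, FixesTorsionD φ l τ → c (f * g) τ = c f (c g τ)) ∧
      (∀ τ, FixesTorsionD φ l τ → c 1 τ = τ) ∧
      (∀ τ, FixesTorsionD φ l τ → c l τ = 1) ∧
      -- (2): via the embedding θ : τ ↦ τ(α) - α into Λ_l^φ (for any fixed root α of
      -- φ_l(u) - z)
      (∀ α : ↥Ez, φ l (α : AlgebraicClosure (RatFunc Fq)) = z →
        (∀ τ, FixesTorsionD φ l τ →
          φ l ((τ α : AlgebraicClosure (RatFunc Fq)) - (α : AlgebraicClosure (RatFunc Fq)))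
            = 0) ∧
        (∀ τ τ', FixesTorsionD φ l τ → FixesTorsionD φ l τ' →
          (τ α : AlgebraicClosure (RatFunc Fq)) = (τ' α : AlgebraicClosure (RatFunc Fq)) →
          τ = τ') ∧
        (∀ τ τ', FixesTorsionD φ l τ → FixesTorsionD φ l τ' →
          ((τ * τ') α : AlgebraicClosure (RatFunc Fq))
              - (α : AlgebraicClosure (RatFunc Fq))
            = ((τ α : AlgebraicClosure (RatFunc Fq))
                - (α : AlgebraicClosure (RatFunc Fq)))
              + ((τ' α : AlgebraicClosure (RatFunc Fq))
                - (α : AlgebraicClosure (RatFunc Fq)))) ∧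
        (∀ f τ, FixesTorsionD φ l τ →
          (c f τ α : AlgebraicClosure (RatFunc Fq)) - (α : AlgebraicClosure (RatFunc Fq))
            = φ f ((τ α : AlgebraicClosure (RatFunc Fq))
                - (α : AlgebraicClosure (RatFunc Fq)))))) := by
  classical
  constructor
  · -- the Γ part
    obtain ⟨c, h1, h2, h3, h4, h5, h6, h7, h8, -⟩ :=
      aux_main hφ hlirr hLl hGal (S := {x : AlgebraicClosure (RatFunc Fq) | φ l x ∈ Γ}) hEΓ
        (fun x hx => by simp only [Set.mem_setOf_eq, hx]; exact Γ.zero_mem)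
        (fun x hx y hy => by
          simp only [Set.mem_setOf_eq] at hx ⊢
          rw [hy]; exact hx)
        (fun x hx => hΓL _ hx)
    exact ⟨c, h1, h2, h3, h4, h5, h6, h7, h8⟩
  · -- the z part
    have hS0 : ∀ x : AlgebraicClosure (RatFunc Fq), φ l x = 0 →
        x ∈ ({x : AlgebraicClosure (RatFunc Fq) | φ l x = 0}
          ∪ {x : AlgebraicClosure (RatFunc Fq) | φ l x = z}) := fun x hx => Or.inl hx
    have hSfib : ∀ x ∈ ({x : AlgebraicClosure (RatFunc Fq) | φ l x = 0}
          ∪ {x : AlgebraicClosure (RatFunc Fq) | φ l x = z}),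
        ∀ y : AlgebraicClosure (RatFunc Fq), φ l y = φ l x →
        y ∈ ({x : AlgebraicClosure (RatFunc Fq) | φ l x = 0}
          ∪ {x : AlgebraicClosure (RatFunc Fq) | φ l x = z}) := by
      intro x hx y hy
      rcases hx with hx | hx
      · exact Or.inl (show φ l y = 0 by rw [hy]; exact hx)
      · exact Or.inr (show φ l y = z by rw [hy]; exact hx)
    have hSL : ∀ x ∈ ({x : AlgebraicClosure (RatFunc Fq) | φ l x = 0}
          ∪ {x : AlgebraicClosure (RatFunc Fq) | φ l x = z}),
        φ l x ∈ L := by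
      intro x hx
      rcases hx with hx | hx
      · rw [hx]; exact zero_mem L
      · rw [hx]; exact hz
    obtain ⟨c, h1, h2, h3, h4, h5, h6, h7, h8, hchar⟩ :=
      aux_main hφ hlirr hLl hGal hEz hS0 hSfib hSL
    refine ⟨c, h1, h2, h3, h4, h5, h6, h7, h8, ?_⟩
    intro α hαz
    have hαL : φ l (α : AlgebraicClosure (RatFunc Fq)) ∈ L := by rw [hαz]; exact hz
    have hαS : (α : AlgebraicClosure (RatFunc Fq))
        ∈ ({x : AlgebraicClosure (RatFunc Fq) | φ l x = 0}
          ∪ {x : AlgebraicClosure (RatFunc Fq) | φ l x = z}) := Or.inr hαz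
    refine ⟨?_, ?_, ?_, ?_⟩
    · intro τ hτ
      exact lambda_torsion hφ (l := l) τ α hαL
    · intro τ τ' hτ hτ' heq
      refine ext_on_S hEz τ τ' ?_
      intro x hx hxE
      rcases hx with hx | hx
      · rw [hτ ⟨x, hxE⟩ hx, hτ' ⟨x, hxE⟩ hx]
      · set m : ↥Ez := ⟨x, hxE⟩ - α with hm
        have hmt : φ l ((m : ↥Ez) : AlgebraicClosure (RatFunc Fq)) = 0 := by
          rw [hm]
          push_cast
          rw [map_sub, hx, hαz, sub_self]
        have hxdec : (⟨x, hxE⟩ : ↥Ez) = α + m := by rw [hm]; ring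
        rw [hxdec, map_add, map_add, hτ m hmt, hτ' m hmt]
        push_cast
        rw [heq]
    · intro τ τ' hτ hτ'
      set lam' : ↥Ez := τ' α - α with hl'
      have hl'c : ((lam' : ↥Ez) : AlgebraicClosure (RatFunc Fq))
          = ((τ' α : ↥Ez) : AlgebraicClosure (RatFunc Fq))
            - (α : AlgebraicClosure (RatFunc Fq)) := by
        rw [hl']; push_cast; ring
      have hl't : φ l ((lam' : ↥Ez) : AlgebraicClosure (RatFunc Fq)) = 0 := by
        rw [hl'c]
        exact lambda_torsion hφ (l := l) τ' α hαL
      have hmm : (τ * τ') α = τ α + lam' := by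
        rw [AlgEquiv.mul_apply, show τ' α = α + lam' by rw [hl']; ring, map_add,
          hτ lam' hl't]
      rw [hmm]
      push_cast
      rw [hl'c]
      ring
    · intro f τ hτ
      rw [hchar f τ hτ α hαS]
      ring
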